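/- arXiv:1411.6844 — 6 statements merged into one kernel-verified Lean document; each statement's English description precedes it below -/
import Mathlib

section
/- Let K ⊆ L be a field extension such that K is relatively algebraically closed in L, and let w be a henselian valuation on L. Then the residue field of the restriction v = w|_K is separably closed in the residue field of w; that is, if f is a monic polynomial over the residue field Kv that is separable and irreducible and has a zero in Lw, then f has degree 1. -/
/-!
Reduce `f` to a separable polynomial over the residue field of `w`; the given zero is simple,
so Hensel's lemma lifts it to a zero `a ∈ O_w` of `f`. Being a root of a nonzero polynomial over
`K`, `a` is algebraic over `K`, hence lies in `K` and so in `O_v`. Its residue is then a zero of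
the irreducible reduction of `f` in `Kv`, which therefore has degree one.
-/

open Polynomial IsLocalRing

/-- The inclusion of the restriction `w.comap K.subtype` of a valuation subring `w` of `L`
to a subfield `K ⊆ L` into `w` itself. -/
def restrIncl {L : Type*} [Field L] (K : Subfield L) (w : ValuationSubring L) :
    (w.comap K.subtype) →+* w where
  toFun x := ⟨K.subtype x.1, x.2⟩
  map_one' := rfl
  map_mul' _ _ := rfl
  map_zero' := rfl
  map_add' _ _ := rfl

theorem HenselianLocalRing.exists_isRoot_of_separable {R : Type*} [CommRing R]
    [HenselianLocalRing R] {f : R[X]} (hf : f.Monic) (hsep : (f.map (residue R)).Separable)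
    {z : ResidueField R} (hz : (f.map (residue R)).IsRoot z) :
    ∃ a : R, f.IsRoot a ∧ residue R a = z := by
  have hder := hsep.eval₂_derivative_ne_zero (RingHom.id _) (x := z) (by rwa [eval₂_id])
  rw [eval₂_id, derivative_map] at hder
  have hlift := ((HenselianLocalRing.TFAE R).out 0 1).mp ‹HenselianLocalRing R›
  exact hlift f hf z (by rwa [aeval_def, eval₂_eq_eval_map]) (by rwa [aeval_def, eval₂_eq_eval_map])

section restrIncl

variable {L : Type*} [Field L] {K : Subfield L} {w : ValuationSubring L}

theorem restrIncl_injective : Function.Injective (restrIncl K w) :=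
  fun _ _ h => Subtype.ext <| Subtype.ext <| congrArg (fun y : w => (y : L)) h

instance : IsLocalHom (restrIncl K w) where
  map_nonunit x hx := by
    obtain ⟨y, hy⟩ := hx.exists_right_inv
    have hyL : ((x : K) : L) * y = 1 := congrArg Subtype.val hy
    have hinv : ((x : K) : L)⁻¹ = y := inv_eq_of_mul_eq_one_right hyL
    have hmem : ((x : K) : L)⁻¹ ∈ w := hinv ▸ y.2
    refine IsUnit.of_mul_eq_one ⟨⟨((x : K) : L)⁻¹, K.inv_mem x.1.2⟩, hmem⟩ ?_
    ext
    show ((x : K) : L) * ((x : K) : L)⁻¹ = 1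
    rw [hinv, hyL]

theorem exists_restrIncl_eq_of_isRoot (halg : ∀ x : L, IsAlgebraic K x → x ∈ K)
    {f : (w.comap K.subtype)[X]} (hf : f ≠ 0) {a : w} (ha : (f.map (restrIncl K w)).IsRoot a) :
    ∃ b, restrIncl K w b = a := by
  have hcomp : w.subtype.comp (restrIncl K w) =
      (algebraMap K L).comp (w.comap K.subtype).subtype := rfl
  have halga : IsAlgebraic K (a : L) := by
    refine ⟨f.map (w.comap K.subtype).subtype,
      (Polynomial.map_ne_zero_iff Subtype.val_injective).mpr hf, ?_⟩
    rw [aeval_def, eval₂_map, ← hcomp, show (a : L) = w.subtype a from rfl, ← hom_eval₂, ← eval_map,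
      ha.eq_zero, map_zero]
  exact ⟨⟨⟨a, halg _ halga⟩, a.2⟩, rfl⟩

end restrIncl

/-- If `K` is relatively algebraically closed in `L` and `w` is a henselian
valuation on `L` with restriction `v` to `K`, then the residue field of `v` is separably
closed in the residue field of `w`: any monic polynomial over `O_v` whose reduction is
separable and irreducible and acquires a zero in the residue field of `w` has degree 1. -/
theorem canonical_henselian_relatively_algebraically_closed_residue
    {L : Type*} [Field L] (K : Subfield L)
    (halg : ∀ x : L, IsAlgebraic K x → x ∈ K)
    (w : ValuationSubring L) [HenselianLocalRing w]
    (f : Polynomial (w.comap K.subtype))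
    (hmonic : f.Monic)
    (hsep : (f.map (IsLocalRing.residue (w.comap K.subtype))).Separable)
    (hirr : Irreducible (f.map (IsLocalRing.residue (w.comap K.subtype))))
    (hroot : ∃ z : IsLocalRing.ResidueField w,
      ((f.map (restrIncl K w)).map (IsLocalRing.residue w)).IsRoot z) :
    f.degree = 1 := by
  obtain ⟨z, hz⟩ := hroot
  have hsep' : ((f.map (restrIncl K w)).map (residue w)).Separable := by
    rw [map_map, ← ResidueField.map_comp_residue, ← map_map]
    exact hsep.map
  obtain ⟨a, ha, -⟩ := HenselianLocalRing.exists_isRoot_of_separable (hmonic.map _) hsep' hz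
  obtain ⟨b, rfl⟩ := exists_restrIncl_eq_of_isRoot halg hmonic.ne_zero ha
  have hb : f.IsRoot b := (isRoot_map_iff restrIncl_injective).mp ha
  rw [← hmonic.degree_map (residue _)]
  exact degree_eq_one_of_irreducible_of_root hirr hb.map
end

section
/- Let K ⊆ L be a field extension with K relatively algebraically closed in L, and let w be a henselian valuation on L. If the residue field Lw is separably closed, then the residue field Kv of the restriction v = w|_K is also separably closed. -/
open Polynomial IsLocalRing

private lemma eval_map_apply' {R S : Type*} [CommRing R] [CommRing S] (φ : R →+* S)
    (g : Polynomial R) (x : R) : (g.map φ).eval (φ x) = φ (g.eval x) := by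
  rw [Polynomial.eval_map, Polynomial.eval₂_at_apply]

/-- If `K` is relatively algebraically closed in `L` and `w` is a henselian
valuation on `L` whose residue field is separably closed, then the residue field of the
restriction `v = w|_K` is also separably closed. -/
theorem residue_sepClosed_of_relatively_algebraically_closed
    {L : Type*} [Field L] (K : Subfield L)
    (halg : ∀ x : L, IsAlgebraic K x → x ∈ K)
    (w : ValuationSubring L) [HenselianLocalRing w]
    (hsep : IsSepClosed (IsLocalRing.ResidueField w)) :
    IsSepClosed (IsLocalRing.ResidueField (w.comap K.subtype)) := by
  classical
  set V := w.comap K.subtype with hV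
  -- inclusion V →+* w
  let ι : V →+* w :=
    { toFun := fun x => ⟨(x.1 : L), x.2⟩
      map_one' := rfl
      map_mul' := fun _ _ => rfl
      map_zero' := rfl
      map_add' := fun _ _ => rfl }
  have hι_inj : Function.Injective ι := by
    intro x y h
    have : ((x.1 : K) : L) = ((y.1 : K) : L) := congrArg (Subtype.val : w → L) h
    exact Subtype.ext (Subtype.ext this)
  have hιloc : IsLocalHom ι := by
    constructor
    intro x hx
    obtain ⟨c, hc⟩ := isUnit_iff_exists_inv.1 hx
    have hmul : ((x.1 : K) : L) * (c : L) = 1 := congrArg Subtype.val hc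
    have hx0 : (x.1 : K) ≠ 0 := by
      intro h0
      rw [show ((x.1 : K) : L) = 0 by rw [h0]; simp, zero_mul] at hmul
      exact zero_ne_one hmul
    have hc_eq : (((x.1)⁻¹ : K) : L) = (c : L) := by
      push_cast
      exact inv_eq_of_mul_eq_one_right hmul
    have hmemV : (x.1)⁻¹ ∈ V := ValuationSubring.mem_comap.2 (by
      show (((x.1)⁻¹ : K) : L) ∈ w
      rw [hc_eq]; exact c.2)
    exact isUnit_iff_exists_inv.2 ⟨⟨(x.1)⁻¹, hmemV⟩, Subtype.ext (mul_inv_cancel₀ hx0)⟩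
  apply IsSepClosed.of_exists_root
  intro p hmonic hirr hsepp
  have hps : Function.Surjective (IsLocalRing.residue V) := Ideal.Quotient.mk_surjective
  obtain ⟨Q, hQmap, -, hQmonic⟩ :=
    Polynomial.lifts_and_degree_eq_and_monic
      ((Polynomial.mem_lifts p).2 ((Polynomial.map_surjective _ hps) p)) hmonic
  set f : Polynomial w := Q.map ι with hf
  have hfmonic : f.Monic := hQmonic.map ι
  set r : Polynomial (ResidueField w) := f.map (IsLocalRing.residue w) with hr
  have hrp : r = p.map (ResidueField.map ι) := by
    rw [hr, hf, Polynomial.map_map, ← hQmap, Polynomial.map_map]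
    have hcomp : (IsLocalRing.residue w).comp ι
        = (ResidueField.map ι).comp (IsLocalRing.residue V) := by
      ext x
      exact (ResidueField.map_residue ι x).symm
    rw [hcomp]
  have hrsep : r.Separable := by rw [hrp]; exact hsepp.map
  have hrdeg : r.degree ≠ 0 := by
    rw [hrp, Polynomial.degree_map_eq_of_injective (ResidueField.map ι).injective]
    exact fun h => hirr.not_isUnit (Polynomial.isUnit_iff_degree_eq_zero.2 h)
  obtain ⟨t, ht⟩ := hsep.exists_root r hrdeg hrsep
  obtain ⟨a₀, ha₀⟩ := (Ideal.Quotient.mk_surjective :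
    Function.Surjective (IsLocalRing.residue w)) t
  have ha₀' : IsLocalRing.residue w a₀ = t := ha₀
  have h1 : IsLocalRing.residue w (f.eval a₀) = r.eval t := by
    rw [← ha₀', hr]
    exact (eval_map_apply' _ _ _).symm
  have heval : f.eval a₀ ∈ maximalIdeal w := by
    rw [← Ideal.Quotient.eq_zero_iff_mem]
    exact h1.trans ht
  have h2 : IsLocalRing.residue w (f.derivative.eval a₀) = r.derivative.eval t := by
    have hd : r.derivative = (f.derivative).map (IsLocalRing.residue w) := by
      rw [hr, Polynomial.derivative_map]
    rw [hd, ← ha₀']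
    exact (eval_map_apply' _ _ _).symm
  have hne : r.derivative.eval t ≠ 0 := by
    obtain ⟨A, B, hAB⟩ := hrsep
    intro h0
    have := congrArg (Polynomial.eval t) hAB
    simp [ht.eq_zero, h0] at this
  have hder : IsUnit (f.derivative.eval a₀) := by
    by_contra hu
    exact hne (h2 ▸ Ideal.Quotient.eq_zero_iff_mem.2
      ((IsLocalRing.mem_maximalIdeal _).2 hu))
  obtain ⟨a, haroot, -⟩ := HenselianLocalRing.is_henselian f hfmonic a₀ heval hder
  have hhom : (algebraMap K L).comp V.subtype = w.subtype.comp ι := by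
    ext x; rfl
  have hmem : (a : L) ∈ K := by
    apply halg
    refine ⟨Q.map (V.subtype), (hQmonic.map V.subtype).ne_zero, ?_⟩
    calc Polynomial.aeval (a : L) (Q.map V.subtype)
        = Polynomial.eval₂ ((algebraMap K L).comp V.subtype) (a : L) Q := by
          rw [Polynomial.aeval_def, Polynomial.eval₂_map]
      _ = Polynomial.eval₂ (w.subtype.comp ι) (a : L) Q := by rw [hhom]
      _ = (Q.map ι).eval₂ w.subtype (w.subtype a) := by rw [Polynomial.eval₂_map]; rfl
      _ = w.subtype (f.eval a) := by rw [Polynomial.eval₂_at_apply, ← hf]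
      _ = 0 := by rw [haroot.eq_zero, map_zero]
  have hmemV : (⟨(a : L), hmem⟩ : K) ∈ V := by
    rw [hV, ValuationSubring.mem_comap]
    exact a.2
  set b : V := ⟨⟨(a : L), hmem⟩, hmemV⟩ with hb
  refine ⟨IsLocalRing.residue V b, ?_⟩
  have hQb : Q.eval b = 0 := by
    apply hι_inj
    rw [map_zero]
    have h3 : f.eval (ι b) = ι (Q.eval b) := by rw [hf]; exact eval_map_apply' _ _ _
    have h4 : ι b = a := Subtype.ext rfl
    rw [← h3, h4, haroot.eq_zero]
  calc p.eval (IsLocalRing.residue V b)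
      = IsLocalRing.residue V (Q.eval b) := by rw [← hQmap]; exact eval_map_apply' _ _ _
    _ = 0 := by rw [hQb, map_zero]
end

section
/- Let Γ be an ordered abelian group such that for every prime p, Γ has a nontrivial p-divisible convex subgroup. Then Γ is elementarily equivalent (as an ordered abelian group) to an ordered abelian group Γ' that has a nontrivial divisible convex subgroup. -/
/-!
Choose, for each prime `p`, a nontrivial convex `p`-divisible subgroup `C p` of `Γ`. Each finite
intersection `⨅ p ∈ s, C p` is again nontrivial, since by convexity it contains the least of
positive elements chosen in the `C p`, and it is `p`-divisible for every `p ∈ s`: a convex subgroup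
inherits `p`-divisibility from any subgroup containing it, because `|z| ≤ |p • z|`. In an ultrapower
of `Γ` along an ultrafilter on finite sets of primes refining `atTop`, the ultraproduct of these
intersections is a nontrivial convex subgroup that is `p`-divisible for every prime `p`, hence
divisible, and the ultrapower is elementarily equivalent to `Γ` by Łoś's theorem.
-/

open FirstOrder Language

/-- Function symbols of the language of ordered abelian groups: `0`, `-`, `+`. -/
inductive OAGFunc : ℕ → Type
  | zero : OAGFunc 0
  | neg : OAGFunc 1
  | add : OAGFunc 2

/-- Relation symbols of the language of ordered abelian groups: `≤`. -/
inductive OAGRel : ℕ → Type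
  | le : OAGRel 2

/-- The first-order language of ordered abelian groups. -/
def oagLang : Language := ⟨OAGFunc, OAGRel⟩

/-- The natural `oagLang`-structure on an ordered abelian group. -/
instance oagStructure (G : Type*) [AddCommGroup G] [LE G] : oagLang.Structure G where
  funMap {n} f v :=
    match n, f, v with
    | _, OAGFunc.zero, _ => 0
    | _, OAGFunc.neg, v => -(v 0)
    | _, OAGFunc.add, v => v 0 + v 1
  RelMap {n} r v :=
    match n, r, v with
    | _, OAGRel.le, v => v 0 ≤ v 1
open Filter

namespace AddSubgroup

section AddGroup

variable {G : Type*} [AddGroup G]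

def IsConvex [LE G] (C : AddSubgroup G) : Prop :=
  ∀ x ∈ C, ∀ y : G, 0 ≤ y → y ≤ x → y ∈ C

def IsDivisibleBy (C : AddSubgroup G) (n : ℕ) : Prop :=
  ∀ y ∈ C, ∃ z ∈ C, n • z = y

theorem IsConvex.iInf [LE G] {ι : Sort*} {C : ι → AddSubgroup G} (hC : ∀ i, (C i).IsConvex) :
    (⨅ i, C i).IsConvex := by
  intro x hx y hy hyx
  simp only [mem_iInf] at hx ⊢
  exact fun i => hC i _ (hx i) y hy hyx

theorem IsDivisibleBy.mul {C : AddSubgroup G} {m n : ℕ} (hm : C.IsDivisibleBy m)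
    (hn : C.IsDivisibleBy n) : C.IsDivisibleBy (m * n) := by
  intro y hy
  obtain ⟨z, hz, rfl⟩ := hm y hy
  obtain ⟨w, hw, rfl⟩ := hn z hz
  exact ⟨w, hw, mul_nsmul' w m n⟩

theorem isDivisibleBy_of_prime {C : AddSubgroup G} (hC : ∀ p : ℕ, p.Prime → C.IsDivisibleBy p)
    {n : ℕ} (hn : n ≠ 0) : C.IsDivisibleBy n := by
  induction n using induction_on_primes with
  | zero => exact absurd rfl hn
  | one => exact fun y hy => ⟨y, hy, one_nsmul y⟩
  | prime_mul p a hp ih => exact (hC p hp).mul (ih (right_ne_zero_of_mul hn))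

end AddGroup

variable {G : Type*} [AddCommGroup G] [LinearOrder G] [IsOrderedAddMonoid G] {C D : AddSubgroup G}

theorem exists_pos_mem_of_ne_bot (hC : C ≠ ⊥) : ∃ a ∈ C, 0 < a := by
  obtain ⟨x, hx, hx0⟩ := C.bot_or_exists_ne_zero.resolve_left hC
  rcases hx0.lt_or_gt with hneg | hpos
  exacts [⟨-x, C.neg_mem hx, neg_pos.2 hneg⟩, ⟨x, hx, hpos⟩]

theorem IsConvex.mem_of_abs_le (hC : C.IsConvex) {x y : G} (hx : x ∈ C) (hyx : |y| ≤ |x|) :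
    y ∈ C := by
  have habs : |x| ∈ C := by
    rcases abs_choice x with h | h <;> rw [h]
    exacts [hx, C.neg_mem hx]
  rcases abs_choice y with h | h
  · exact h ▸ hC _ habs _ (abs_nonneg y) hyx
  · exact neg_neg y ▸ C.neg_mem (h ▸ hC _ habs _ (abs_nonneg y) hyx)

theorem IsConvex.isDivisibleBy_of_le (hD : D.IsConvex) (hDC : D ≤ C) {n : ℕ} (hn : n ≠ 0)
    (hC : C.IsDivisibleBy n) : D.IsDivisibleBy n := by
  intro y hy
  obtain ⟨z, -, rfl⟩ := hC y (hDC hy)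
  refine ⟨z, hD.mem_of_abs_le hy ?_, rfl⟩
  rw [abs_nsmul]
  exact le_smul_of_one_le_left (abs_nonneg z) (Nat.one_le_iff_ne_zero.2 hn)

theorem biInf_ne_bot {ι : Type*} {C : ι → AddSubgroup G} (hC : ∀ i, (C i).IsConvex)
    (hne : ∀ i, C i ≠ ⊥) {s : Finset ι} (hs : s.Nonempty) : ⨅ i ∈ s, C i ≠ ⊥ := by
  choose e heC he0 using fun i => exists_pos_mem_of_ne_bot (hne i)
  have hpos : 0 < s.inf' hs e := (Finset.lt_inf'_iff hs).2 fun i _ => he0 i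
  refine ne_bot_iff_exists_ne_zero.2 ⟨⟨s.inf' hs e, ?_⟩, ?_⟩
  · simp only [mem_iInf]
    exact fun i hi => hC i _ (heC i) _ hpos.le (Finset.inf'_le e hi)
  · simpa using hpos.ne'

end AddSubgroup

namespace Filter.Germ

variable {α G : Type*} [AddCommGroup G] (l : Filter α) (D : α → AddSubgroup G)

def addSubgroup : AddSubgroup (l.Germ G) where
  carrier := {x | ∃ g : α → G, (g : l.Germ G) = x ∧ ∀ᶠ a in l, g a ∈ D a}
  zero_mem' := ⟨0, rfl, .of_forall fun a => (D a).zero_mem⟩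
  add_mem' := by
    rintro _ _ ⟨f, rfl, hf⟩ ⟨g, rfl, hg⟩
    exact ⟨f + g, rfl, (hf.and hg).mono fun a h => (D a).add_mem h.1 h.2⟩
  neg_mem' := by
    rintro _ ⟨f, rfl, hf⟩
    exact ⟨-f, rfl, hf.mono fun a h => (D a).neg_mem h⟩

variable {l D}

theorem coe_mem_addSubgroup {g : α → G} :
    (g : l.Germ G) ∈ addSubgroup l D ↔ ∀ᶠ a in l, g a ∈ D a := by
  refine ⟨fun ⟨f, hfg, hf⟩ => ?_, fun hg => ⟨g, rfl, hg⟩⟩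
  exact ((coe_eq.1 hfg).and hf).mono fun a h => h.1 ▸ h.2

theorem isConvex_addSubgroup [LE G] (hD : ∀ᶠ a in l, (D a).IsConvex) :
    (addSubgroup l D).IsConvex := by
  rintro _ ⟨f, rfl, hf⟩ y hy hyf
  induction y using Quotient.inductionOn' with | h g => ?_
  refine coe_mem_addSubgroup.2 ?_
  filter_upwards [hD, hf, coe_le.1 hy, coe_le.1 hyf] with a hDa hfa h0 hgf
  exact hDa _ hfa _ h0 hgf

theorem addSubgroup_ne_bot [l.NeBot] (hD : ∀ᶠ a in l, D a ≠ ⊥) :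
    addSubgroup l D ≠ ⊥ := by
  have : ∀ a, ∃ x, D a ≠ ⊥ → x ∈ D a ∧ x ≠ 0 := fun a => by
    by_cases ha : D a = ⊥
    · exact ⟨0, fun h => absurd ha h⟩
    · obtain ⟨x, hx, hx0⟩ := (D a).bot_or_exists_ne_zero.resolve_left ha
      exact ⟨x, fun _ => ⟨hx, hx0⟩⟩
  choose g hg using this
  intro hbot
  have hg0 : (g : l.Germ G) = 0 := by
    rw [← AddSubgroup.mem_bot, ← hbot, coe_mem_addSubgroup]
    exact hD.mono fun a ha => (hg a ha).1
  obtain ⟨a, hga, hDa⟩ := ((coe_eq.1 hg0).and hD).exists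
  exact (hg a hDa).2 hga

theorem isDivisibleBy_addSubgroup {n : ℕ} (hD : ∀ᶠ a in l, (D a).IsDivisibleBy n) :
    (addSubgroup l D).IsDivisibleBy n := by
  rintro _ ⟨f, rfl, hf⟩
  have : ∀ a, ∃ z, (D a).IsDivisibleBy n → f a ∈ D a → z ∈ D a ∧ n • z = f a := by
    intro a
    by_cases ha : (D a).IsDivisibleBy n ∧ f a ∈ D a
    · obtain ⟨z, hz, hzf⟩ := ha.1 _ ha.2
      exact ⟨z, fun _ _ => ⟨hz, hzf⟩⟩
    · exact ⟨0, fun h h' => absurd ⟨h, h'⟩ ha⟩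
  choose z hz using this
  refine ⟨z, coe_mem_addSubgroup.2 ?_, coe_eq.2 ?_⟩
  · exact (hD.and hf).mono fun a ha => (hz a ha.1 ha.2).1
  · exact (hD.and hf).mono fun a ha => (hz a ha.1 ha.2).2

end Filter.Germ

section Ultrapower

variable {α : Type*} (φ : Ultrafilter α) (G : Type*) [AddCommGroup G] [LE G]

def ultraproductEquivGerm :
    oagLang.Equiv ((φ : Filter α).Product fun _ => G) ((φ : Filter α).Germ G) where
  -- `Filter.Germ` and `Filter.Product` are the same quotient; only their structures differ.
  toEquiv := Equiv.refl _
  map_fun' {n} f x := by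
    induction x using Quotient.induction_on_pi with | h g => ?_
    erw [Ultraproduct.funMap_cast]
    cases f <;> rfl
  map_rel' {n} r x := by
    induction x using Quotient.induction_on_pi with | h g => ?_
    cases r
    exact (relMap_quotient_mk' (L := oagLang) (s := (φ : Filter α).productSetoid fun _ => G)
      OAGRel.le g).symm

theorem elementarilyEquivalent_germ :
    oagLang.ElementarilyEquivalent G ((φ : Filter α).Germ G) := by
  refine .trans ?_ (StrongHomClass.elementarilyEquivalent (ultraproductEquivGerm φ G))
  refine (elementarilyEquivalent_iff).2 fun ψ => ?_
  rw [Ultraproduct.sentence_realize]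
  simp

end Ultrapower

open AddSubgroup in
theorem exists_germ_isConvex_ne_bot_isDivisibleBy {G ι : Type*} [AddCommGroup G] [LinearOrder G]
    [IsOrderedAddMonoid G] [Nonempty ι] (C : ι → AddSubgroup G) (hC : ∀ i, (C i).IsConvex)
    (hne : ∀ i, C i ≠ ⊥) :
    ∃ (φ : Ultrafilter (Finset ι)) (E : AddSubgroup ((φ : Filter (Finset ι)).Germ G)),
      E.IsConvex ∧ E ≠ ⊥ ∧
        ∀ i n, n ≠ 0 → (C i).IsDivisibleBy n → E.IsDivisibleBy n := by
  let φ := Ultrafilter.of (atTop : Filter (Finset ι))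
  have hmem : ∀ i, ∀ᶠ s in (φ : Filter (Finset ι)), i ∈ s := fun i =>
    Ultrafilter.of_le _ <| (eventually_ge_atTop {i}).mono fun _ hs =>
      hs (Finset.mem_singleton_self i)
  have hconv : ∀ s : Finset ι, (⨅ i ∈ s, C i).IsConvex := fun s =>
    IsConvex.iInf fun i => IsConvex.iInf fun _ => hC i
  refine ⟨φ, Germ.addSubgroup (φ : Filter (Finset ι)) fun s => ⨅ i ∈ s, C i, ?_, ?_,
    fun i n hn hdiv => ?_⟩
  · exact Germ.isConvex_addSubgroup (.of_forall hconv)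
  · obtain ⟨i⟩ := ‹Nonempty ι›
    exact Germ.addSubgroup_ne_bot <| (hmem i).mono fun s hs => biInf_ne_bot hC hne ⟨i, hs⟩
  · exact Germ.isDivisibleBy_addSubgroup <| (hmem i).mono fun s hs =>
      (hconv s).isDivisibleBy_of_le (biInf_le C hs) hn hdiv

/-- if an ordered abelian group `Γ` has, for every prime `p`, a nontrivial
`p`-divisible convex subgroup, then `Γ` is elementarily equivalent (in the language of
ordered abelian groups) to an ordered abelian group `Γ'` having a nontrivial divisible
convex subgroup. -/
theorem elementarilyEquivalent_divisible_convex_subgroup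
    (Γ : Type) [AddCommGroup Γ] [LinearOrder Γ] [IsOrderedAddMonoid Γ]
    (h : ∀ p : ℕ, p.Prime →
      ∃ C : AddSubgroup Γ, C ≠ ⊥ ∧
        (∀ x ∈ C, ∀ y : Γ, 0 ≤ y → y ≤ x → y ∈ C) ∧
        (∀ y ∈ C, ∃ z ∈ C, p • z = y)) :
    ∃ (Γ' : Type) (_i : AddCommGroup Γ') (_l : LinearOrder Γ') (_o : IsOrderedAddMonoid Γ'),
      oagLang.ElementarilyEquivalent Γ Γ' ∧
      ∃ C : AddSubgroup Γ', C ≠ ⊥ ∧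
        (∀ x ∈ C, ∀ y : Γ', 0 ≤ y → y ≤ x → y ∈ C) ∧
        (∀ n : ℕ, 0 < n → ∀ y ∈ C, ∃ z ∈ C, n • z = y) := by
  choose C hne hconv hdiv using fun p : Nat.Primes => h p p.prop
  obtain ⟨φ, E, hEconv, hEne, hEdiv⟩ := exists_germ_isConvex_ne_bot_isDivisibleBy C hconv hne
  refine ⟨_, inferInstance, inferInstance, inferInstance, elementarilyEquivalent_germ φ Γ,
    E, hEne, hEconv, fun n hn => AddSubgroup.isDivisibleBy_of_prime (fun p hp => ?_) hn.ne'⟩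
  exact hEdiv ⟨p, hp⟩ p hp.ne_zero (hdiv ⟨p, hp⟩)
end

section
/- Let Γ be an ordered abelian group. If Γ is elementarily equivalent to ℚ ⊕ Δ (inverse lexicographic order) for some ordered abelian group Δ, then Γ has a nontrivial p-divisible convex subgroup for every prime p. -/
open FirstOrder Language

/-!
The sentence "some `x > 0` has every element of `[0, x]` divisible by `p`" is first order, and
it holds in `ℚ ⊕ Δ = Lex (Δ × ℚ)` with `x = (0, 1)`; so it holds in `Γ`. For such an `x`
the convex subgroup generated by `x` (its archimedean closed ball) is `p`-divisible: an element
of `[0, (n + 1) • x]` lies in `[0, x]` or is `x` plus an element of `[0, n • x]`.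
-/

section Terms

variable {n : ℕ}

def zeroT : oagLang.Term (Empty ⊕ Fin n) :=
  Constants.term (OAGFunc.zero : oagLang.Constants)

def addT (s t : oagLang.Term (Empty ⊕ Fin n)) : oagLang.Term (Empty ⊕ Fin n) :=
  Functions.apply₂ (OAGFunc.add : oagLang.Functions 2) s t

def smulT : ℕ → oagLang.Term (Empty ⊕ Fin n) → oagLang.Term (Empty ⊕ Fin n)
  | 0, _ => zeroT
  | k + 1, t => addT (smulT k t) t

def leF (s t : oagLang.Term (Empty ⊕ Fin n)) : oagLang.BoundedFormula Empty n :=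
  Relations.boundedFormula₂ (OAGRel.le : oagLang.Relations 2) s t

variable {G : Type*} [AddCommGroup G] [LE G]

@[simp] lemma realize_zeroT (v : Empty ⊕ Fin n → G) : (zeroT : oagLang.Term _).realize v = 0 :=
  rfl

@[simp] lemma realize_addT (s t : oagLang.Term (Empty ⊕ Fin n)) (v : Empty ⊕ Fin n → G) :
    (addT s t).realize v = s.realize v + t.realize v :=
  rfl

@[simp] lemma realize_smulT (k : ℕ) (t : oagLang.Term (Empty ⊕ Fin n))
    (v : Empty ⊕ Fin n → G) :
    (smulT k t).realize v = k • t.realize v := by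
  induction k with
  | zero => simp [smulT]
  | succ k ih => simp [smulT, ih, succ_nsmul]

@[simp] lemma realize_leF (s t : oagLang.Term (Empty ⊕ Fin n)) (v : Empty → G)
    (xs : Fin n → G) :
    (leF s t).Realize v xs ↔ s.realize (Sum.elim v xs) ≤ t.realize (Sum.elim v xs) :=
  Iff.rfl

end Terms

def divSentence (p : ℕ) : oagLang.Sentence :=
  ∃' ((∼(leF (&0) zeroT)) ⊓
    ∀' ((leF zeroT (&1) ⊓ leF (&1) (&0)) ⟹ ∃' (Term.bdEqual (smulT p (&2)) (&1))))

lemma realize_divSentence {G : Type*} [AddCommGroup G] [Preorder G] (p : ℕ) :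
    G ⊨ divSentence p ↔ ∃ x : G, ¬x ≤ 0 ∧ Set.Icc 0 x ⊆ Set.range (p • ·) := by
  simp [divSentence, Sentence.Realize, Formula.Realize, Fin.snoc, Set.subset_def, and_imp]

lemma Prod.Lex.Icc_zero_toLex_subset_range_nsmul {α β : Type*} [AddMonoid α] [Preorder α]
    [AddMonoid β] [Preorder β] {p : ℕ} {b : β} (hb : Set.Icc 0 b ⊆ Set.range (p • ·)) :
    Set.Icc 0 (toLex ((0 : α), b)) ⊆ Set.range (p • ·) := by
  rintro _ ⟨h0, h1⟩
  obtain ⟨⟨a, c⟩, rfl⟩ := toLex.surjective ‹Lex (α × β)›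
  simp only [← toLex_zero, Prod.Lex.toLex_le_toLex, Prod.fst_zero, Prod.snd_zero] at h0 h1
  obtain ⟨rfl, hc0⟩ : a = 0 ∧ 0 ≤ c := by
    rcases h0 with h0 | ⟨rfl, hc0⟩
    · rcases h1 with h1 | ⟨rfl, -⟩
      · exact absurd (h0.trans h1) (lt_irrefl _)
      · exact absurd h0 (lt_irrefl _)
    · exact ⟨rfl, hc0⟩
  obtain ⟨z, hz : p • z = c⟩ := hb ⟨hc0, by simpa using h1⟩
  have hlift : p • toLex ((0 : α), z) = toLex (p • (0, z)) := rfl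
  exact ⟨toLex (0, z), hlift.trans (by rw [Prod.smul_mk, smul_zero, hz])⟩

namespace ArchimedeanClass

variable {Γ : Type*} [AddCommGroup Γ] [LinearOrder Γ] [IsOrderedAddMonoid Γ]

lemma mem_closedBallAddSubgroup_of_abs_le {c : ArchimedeanClass Γ} {a b : Γ} (hba : |b| ≤ |a|)
    (ha : a ∈ c.closedBallAddSubgroup) : b ∈ c.closedBallAddSubgroup := by
  rw [mem_closedBallAddSubgroup_iff] at ha ⊢
  exact ha.trans (mk_le_mk_of_abs hba)

end ArchimedeanClass

section Divisibility

variable {Γ : Type*} [AddCommGroup Γ] [LinearOrder Γ] [IsOrderedAddMonoid Γ] {p : ℕ} {x : Γ}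

lemma Icc_zero_nsmul_subset_range_nsmul (hx : 0 ≤ x) (hdiv : Set.Icc 0 x ⊆ Set.range (p • ·))
    (n : ℕ) : Set.Icc 0 (n • x) ⊆ Set.range (p • ·) := by
  induction n with
  | zero =>
    rintro y ⟨h0, h1⟩
    exact ⟨0, by simp [le_antisymm (by simpa using h1) h0]⟩
  | succ n ih =>
    rintro y ⟨h0, h1⟩
    rcases le_total y x with hyx | hxy
    · exact hdiv ⟨h0, hyx⟩
    · obtain ⟨z, hz⟩ := ih ⟨sub_nonneg.2 hxy, sub_le_iff_le_add.2 (succ_nsmul x n ▸ h1)⟩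
      obtain ⟨w, hw⟩ := hdiv ⟨hx, le_rfl⟩
      exact ⟨z + w, by simp only [smul_add, hz, hw, sub_add_cancel]⟩

open ArchimedeanClass in
lemma exists_nsmul_eq_of_mem_closedBallAddSubgroup (hp : p ≠ 0) (hx : 0 ≤ x)
    (hdiv : Set.Icc 0 x ⊆ Set.range (p • ·)) {y : Γ}
    (hy : y ∈ (mk x).closedBallAddSubgroup) :
    ∃ z ∈ (mk x).closedBallAddSubgroup, p • z = y := by
  obtain ⟨n, hn⟩ := mk_le_mk.1 (mem_closedBallAddSubgroup_iff.1 hy)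
  obtain ⟨w, hw : p • w = |y|⟩ := Icc_zero_nsmul_subset_range_nsmul hx hdiv n
    ⟨abs_nonneg y, by rwa [abs_of_nonneg hx] at hn⟩
  obtain ⟨z, hz⟩ : ∃ z, p • z = y := by
    rcases abs_choice y with h | h
    · exact ⟨w, hw.trans h⟩
    · exact ⟨-w, by rw [smul_neg, hw, h, neg_neg]⟩
  refine ⟨z, mem_closedBallAddSubgroup_of_abs_le ?_ hy, hz⟩
  calc |z| ≤ p • |z| := le_self_nsmul (abs_nonneg z) hp
    _ = |y| := by rw [← abs_nsmul, hz]

end Divisibility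

open ArchimedeanClass in
theorem pDivisible_convex_of_elementarilyEquivalent_lex_general
    (Γ : Type*) [AddCommGroup Γ] [LinearOrder Γ] [IsOrderedAddMonoid Γ]
    (Δ : Type*) [AddCommGroup Δ] [LinearOrder Δ]
    (h : oagLang.ElementarilyEquivalent Γ (Lex (Δ × ℚ)))
    (p : ℕ) (hp : p.Prime) :
    ∃ C : AddSubgroup Γ, C ≠ ⊥ ∧
      (∀ x ∈ C, ∀ y : Γ, 0 ≤ y → y ≤ x → y ∈ C) ∧
      (∀ y ∈ C, ∃ z ∈ C, p • z = y) := by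
  have hℚ : Set.Icc (0 : ℚ) 1 ⊆ Set.range (p • ·) := fun q _ =>
    ⟨q / p, by simp [nsmul_eq_mul, mul_div_cancel₀ q (Nat.cast_ne_zero.2 hp.ne_zero)]⟩
  have hLex : Lex (Δ × ℚ) ⊨ divSentence p :=
    (realize_divSentence p).2 ⟨toLex (0, 1), by simp [← toLex_zero, Prod.Lex.toLex_le_toLex],
      Prod.Lex.Icc_zero_toLex_subset_range_nsmul hℚ⟩
  obtain ⟨x, hx_not_le, hdiv⟩ :=
    (realize_divSentence p).1 ((elementarilyEquivalent_iff.1 h _).2 hLex)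
  have hx : 0 < x := not_le.1 hx_not_le
  refine ⟨(mk x).closedBallAddSubgroup, ?_, ?_, fun y hy =>
    exists_nsmul_eq_of_mem_closedBallAddSubgroup hp.ne_zero hx.le hdiv hy⟩
  · exact AddSubgroup.ne_bot_iff_exists_ne_zero.2
      ⟨⟨x, mem_closedBallAddSubgroup_iff.2 le_rfl⟩, by simpa using hx.ne'⟩
  · intro a ha y hy0 hya
    refine mem_closedBallAddSubgroup_of_abs_le ?_ ha
    rw [abs_of_nonneg hy0]
    exact hya.trans (le_abs_self a)

/-- if an ordered abelian group `Γ` is elementarily equivalent to `ℚ ⊕ Δ`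
with the inverse lexicographic order (the `ℚ`-coordinate being less significant, i.e. to
`Lex (Δ × ℚ)`), then `Γ` has a nontrivial `p`-divisible convex subgroup for every prime. -/
theorem pDivisible_convex_of_elementarilyEquivalent_lex
    (Γ : Type*) [AddCommGroup Γ] [LinearOrder Γ] [IsOrderedAddMonoid Γ]
    (Δ : Type*) [AddCommGroup Δ] [LinearOrder Δ] [IsOrderedAddMonoid Δ]
    (h : oagLang.ElementarilyEquivalent Γ (Lex (Δ × ℚ)))
    (p : ℕ) (hp : p.Prime) :
    ∃ C : AddSubgroup Γ, C ≠ ⊥ ∧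
      (∀ x ∈ C, ∀ y : Γ, 0 ≤ y → y ≤ x → y ∈ C) ∧
      (∀ y ∈ C, ∃ z ∈ C, p • z = y) :=
  pDivisible_convex_of_elementarilyEquivalent_lex_general Γ Δ h p hp
end

section
/- Any two henselian valuations v, w on a field K that is not separably closed and such that both residue fields Kv and Kw are not separably closed are comparable: O_v ⊆ O_w or O_w ⊆ O_v. -/
/-!
If `v` and `w` are incomparable and `w` is henselian, then `Kv` is algebraically closed.
Take `a ∈ O_v \ O_w` and `b ∈ O_w \ O_v`; `e = a / (a + b)` lies in `O_v ∩ O_w` and is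
`≡ 0` modulo `v` and `≡ 1` modulo `w`, and the same construction shows that `O_v ∩ O_w` maps
onto `Kv`. Lift a monic `G` of degree `n ≥ 2` over `Kv` to a monic `P` over `O_v ∩ O_w` and put
`H = (1 - e) P + e (X ^ n - X)`. Modulo `w`, `H` is `X ^ n - X`, with the simple root `0`, so
Hensel's lemma gives a root of `H` in `O_w`. That root is integral over the integrally closed
ring `O_v`, and since `H ≡ G` modulo `v` its residue is a root of `G`.
-/

open Polynomial IsLocalRing

theorem HenselianLocalRing.exists_isRoot_of_map_residue_eq_X_pow_sub_X {R : Type*} [CommRing R]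
    [HenselianLocalRing R] {f : R[X]} (hf : f.Monic) {n : ℕ} (hn : 2 ≤ n)
    (hfX : f.map (residue R) = X ^ n - X) : ∃ r, f.IsRoot r := by
  have hres (g : R[X]) : residue R (g.eval 0) = (g.map (residue R)).eval 0 := by
    rw [eval_map, ← map_zero (residue R), eval₂_at_apply]
  have hroot : f.eval 0 ∈ maximalIdeal R := by
    rw [← residue_eq_zero_iff, hres, hfX]
    simp [zero_pow (by omega : n ≠ 0)]
  have hsimple : IsUnit (f.derivative.eval 0) := by
    rw [← residue_ne_zero_iff_isUnit, hres, ← derivative_map, hfX]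
    simp [derivative_X_pow, zero_pow (by omega : n - 1 ≠ 0)]
  obtain ⟨r, hr, -⟩ := HenselianLocalRing.is_henselian f hf 0 hroot hsimple
  exact ⟨r, hr⟩

namespace ValuationSubring

variable {K : Type*} [Field K]

lemma one_lt_valuation_of_notMem {A : ValuationSubring K} {x : K} (h : x ∉ A) :
    1 < A.valuation x :=
  lt_of_not_ge fun hle => h (A.mem_of_valuation_le_one x hle)

lemma residue_eq_zero_iff_valuation_lt_one (A : ValuationSubring K) (x : A) :
    residue A x = 0 ↔ A.valuation x < 1 :=
  (residue_eq_zero_iff x).trans (A.valuation_lt_one_iff x)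

lemma valuation_add_eq_of_mem_of_notMem {A : ValuationSubring K} {a b : K} (ha : a ∈ A)
    (hb : b ∉ A) : A.valuation (a + b) = A.valuation b :=
  Valuation.map_add_eq_of_lt_right _
    (((A.valuation_le_one_iff a).2 ha).trans_lt (one_lt_valuation_of_notMem hb))

lemma exists_valuation_lt_one_mul_one_sub_mem {A B : ValuationSubring K} {a b : K}
    (haA : a ∈ A) (haB : a ∉ B) (hbB : b ∈ B) (hbA : b ∉ A) :
    ∃ e, A.valuation e < 1 ∧ a * (1 - e) ∈ B := by
  have hvA : A.valuation (a + b) = A.valuation b := valuation_add_eq_of_mem_of_notMem haA hbA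
  have hvB : B.valuation (a + b) = B.valuation a := by
    rw [add_comm]; exact valuation_add_eq_of_mem_of_notMem hbB haB
  have hb0 : 0 < A.valuation b := zero_lt_one.trans (one_lt_valuation_of_notMem hbA)
  have ha0 : B.valuation a ≠ 0 := (zero_lt_one.trans (one_lt_valuation_of_notMem haB)).ne'
  have hab : a + b ≠ 0 := by
    intro h
    rw [h, map_zero] at hvA
    exact hb0.ne hvA
  refine ⟨a / (a + b), ?_, ?_⟩
  · rw [map_div₀, hvA, div_lt_one₀ hb0]
    exact ((A.valuation_le_one_iff a).2 haA).trans_lt (one_lt_valuation_of_notMem hbA)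
  · rw [show a * (1 - a / (a + b)) = a * b / (a + b) by field_simp; ring]
    apply B.mem_of_valuation_le_one
    rw [map_div₀, map_mul, hvB, mul_div_cancel_left₀ _ ha0]
    exact (B.valuation_le_one_iff b).2 hbB

variable (A B : ValuationSubring K)

abbrev interSubring : Subring K := A.toSubring ⊓ B.toSubring

def interToLeft : A.interSubring B →+* A := Subring.inclusion inf_le_left

def interToRight : A.interSubring B →+* B := Subring.inclusion inf_le_right

variable {A B}

lemma surjective_residue_comp_interToLeft (hBA : ¬ B ≤ A) :
    Function.Surjective ((residue A).comp (A.interToLeft B)) := by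
  obtain ⟨b, hbB, hbA⟩ := SetLike.not_le_iff_exists.1 hBA
  intro z
  obtain ⟨x, rfl⟩ := residue_surjective z
  by_cases hxB : (x : K) ∈ B
  · exact ⟨⟨x, x.2, hxB⟩, rfl⟩
  obtain ⟨e, he, hxe⟩ := exists_valuation_lt_one_mul_one_sub_mem x.2 hxB hbB hbA
  have hxe' : (x : K) * (1 - e) ∈ A :=
    A.mul_mem _ _ x.2 (sub_mem A.one_mem (A.mem_of_valuation_le_one _ he.le))
  refine ⟨⟨_, hxe', hxe⟩, ?_⟩
  rw [RingHom.comp_apply, ← sub_eq_zero, ← map_sub, residue_eq_zero_iff_valuation_lt_one]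
  change A.valuation (x * (1 - e) - x) < 1
  rw [show (x : K) * (1 - e) - x = -(x * e) by ring, Valuation.map_neg, map_mul]
  exact (mul_le_of_le_one_left' ((A.valuation_le_one_iff _).2 x.2)).trans_lt he

lemma exists_residue_interToLeft_eq_zero_and_residue_interToRight_eq_one
    (hAB : ¬ A ≤ B) (hBA : ¬ B ≤ A) :
    ∃ e, residue A (A.interToLeft B e) = 0 ∧ residue B (A.interToRight B e) = 1 := by
  obtain ⟨a, haA, haB⟩ := SetLike.not_le_iff_exists.1 hAB
  obtain ⟨b, hbB, hbA⟩ := SetLike.not_le_iff_exists.1 hBA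
  obtain ⟨e, he, hae⟩ := exists_valuation_lt_one_mul_one_sub_mem haA haB hbB hbA
  have he' : B.valuation (1 - e) < 1 := by
    by_contra! h
    have := (B.valuation_le_one_iff _).2 hae
    rw [map_mul] at this
    exact (one_lt_valuation_of_notMem haB).not_ge ((le_mul_of_one_le_right' h).trans this)
  have heB : e ∈ B := by
    simpa using sub_mem B.one_mem (B.mem_of_valuation_le_one _ he'.le)
  refine ⟨⟨e, Subring.mem_inf.2 ⟨A.mem_of_valuation_le_one _ he.le, heB⟩⟩,
    (residue_eq_zero_iff_valuation_lt_one _ _).2 he, ?_⟩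
  rw [← sub_eq_zero, ← map_one (residue B), ← map_sub, residue_eq_zero_iff_valuation_lt_one]
  change B.valuation (e - 1) < 1
  rwa [Valuation.map_sub_swap]

lemma exists_isRoot_map_residue_of_aeval_eq_zero {f : A[X]} (hf : f.Monic) {x : K}
    (hx : aeval x f = 0) : ∃ y, (f.map (residue A)).IsRoot y := by
  obtain ⟨a, rfl⟩ := IsIntegrallyClosed.isIntegral_iff.1 ⟨f, hf, hx⟩
  have ha : f.IsRoot a := IsFractionRing.injective A K <| by
    rwa [map_zero, ← aeval_algebraMap_apply_eq_algebraMap_eval]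
  exact ⟨_, ha.map⟩

variable [HenselianLocalRing B]

theorem exists_isRoot_of_monic_of_two_le_natDegree (hAB : ¬ A ≤ B) (hBA : ¬ B ≤ A)
    {G : (ResidueField A)[X]} (hG : G.Monic) (hn : 2 ≤ G.natDegree) : ∃ x, G.IsRoot x := by
  set n := G.natDegree
  obtain ⟨P, hPG, hPn, hPm⟩ := lifts_and_natDegree_eq_and_monic
    (map_surjective _ (surjective_residue_comp_interToLeft hBA) G) hG
  obtain ⟨e, heA, heB⟩ :=
    exists_residue_interToLeft_eq_zero_and_residue_interToRight_eq_one hAB hBA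
  set H := C (1 - e) * P + C e * (X ^ n - X)
  have hH : H.Monic := by
    refine monic_of_natDegree_le_of_coeff_eq_one n ?_ ?_
    · refine natDegree_add_le_of_degree_le ((natDegree_C_mul_le _ _).trans hPn.le) ?_
      refine (natDegree_C_mul_le _ _).trans ((natDegree_sub_le _ _).trans ?_)
      rw [natDegree_X_pow, natDegree_X]
      omega
    · have hPcoeff : P.coeff n = 1 := by rw [← hPm.coeff_natDegree, hPn]
      rw [coeff_add, coeff_C_mul, coeff_C_mul, hPcoeff, coeff_sub, coeff_X_pow_self, coeff_X,
        if_neg (by omega)]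
      ring
  have hHA : (H.map (A.interToLeft B)).map (residue A) = G := by
    simp [H, map_map, ← hPG, heA]
  have hHB : (H.map (A.interToRight B)).map (residue B) = X ^ n - X := by
    simp [H, map_map, heB]
  obtain ⟨r, hr⟩ := HenselianLocalRing.exists_isRoot_of_map_residue_eq_X_pow_sub_X
    (hH.map _) hn hHB
  have hrA : aeval (r : K) (H.map (A.interToLeft B)) = 0 := by
    rw [aeval_def, eval₂_map]
    change eval₂ ((algebraMap B K).comp (A.interToRight B)) (algebraMap B K r) H = 0
    rw [← eval₂_map, eval₂_at_apply, hr.eq_zero, map_zero]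
  obtain ⟨x, hx⟩ := exists_isRoot_map_residue_of_aeval_eq_zero (hH.map _) hrA
  exact ⟨x, hHA ▸ hx⟩

theorem isAlgClosed_residueField_of_not_le_of_not_le (hAB : ¬ A ≤ B) (hBA : ¬ B ≤ A) :
    IsAlgClosed (ResidueField A) := by
  refine IsAlgClosed.of_exists_root _ fun G hG hirr => ?_
  rcases (Nat.succ_le_of_lt hirr.natDegree_pos).eq_or_lt with h | h
  · exact exists_root_of_degree_eq_one (degree_eq_iff_natDegree_eq_of_pos one_pos |>.2 h.symm)
  · exact exists_isRoot_of_monic_of_two_le_natDegree hAB hBA hG h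

end ValuationSubring

theorem henselian_H1_comparable_general
    {K : Type*} [Field K]
    (v w : ValuationSubring K)
    [HenselianLocalRing w]
    (hv : ¬ IsSepClosed (IsLocalRing.ResidueField v)) :
    v ≤ w ∨ w ≤ v := by
  by_contra! h
  have := ValuationSubring.isAlgClosed_residueField_of_not_le_of_not_le h.1 h.2
  exact hv inferInstance

/-- any two henselian valuations on a field `K` which is not separably
closed, both of whose residue fields are not separably closed, are comparable. -/
theorem henselian_H1_comparable
    {K : Type*} [Field K] (hK : ¬ IsSepClosed K)
    (v w : ValuationSubring K)
    [HenselianLocalRing v] [HenselianLocalRing w]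
    (hv : ¬ IsSepClosed (IsLocalRing.ResidueField v))
    (hw : ¬ IsSepClosed (IsLocalRing.ResidueField w)) :
    v ≤ w ∨ w ≤ v :=
  henselian_H1_comparable_general v w hv
end

section
/- Let (K,v) be a valued field where v extends uniquely to the maximal pro-p extension K(p), and let f ∈ O_v[T] be a polynomial that splits in K(p). If a ∈ O_v satisfies f̄(ā) = 0 and f̄'(ā) ≠ 0 in the residue field, then there exists α ∈ O_v with f(α) = 0 and ᾱ = ā. -/
/-!
Let `W` be the unique extension of `v` to the Galois extension `L = K(p)`. Over `O_W` the
polynomial `f` factors as `d · ∏ (X - s) · u` with `u ≡ 1` modulo the maximal ideal: roots `s`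
in `O_W` give the linear factors, and a root `t ∉ O_W` contributes `X - t = -t · (1 - t⁻¹ X)`
with `t⁻¹` in the maximal ideal. Reducing, `f̄ = d̄ · ∏ (X - s̄)`, so the simple root `ā` of `f̄`
is the residue of exactly one root `r` of `f`. Uniqueness of `W` makes it `Gal(L/K)`-stable,
so every automorphism sends `r` to a root with the same residue, i.e. fixes `r`; hence `r ∈ K`.
-/

/-- The compositum `K(p)` of all Galois extensions of `K` of `p`-power degree inside an
extension field `Ω` (to be taken separably/algebraically closed). -/
@[irreducible] noncomputable def pClosure (p : ℕ) (K : Type*) [Field K]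
    (Ω : Type*) [Field Ω] [Algebra K Ω] : IntermediateField K Ω :=
  ⨆ N ∈ {N : IntermediateField K Ω |
      IsGalois K N ∧ FiniteDimensional K N ∧ ∃ k : ℕ, Module.finrank K N = p ^ k}, N

open Polynomial IsLocalRing

namespace ValuationSubring

variable {L : Type*} [Field L] (O : ValuationSubring L)

theorem exists_prod_X_sub_C_eq_C_mul_map (R : Multiset L) :
    ∃ (e : L) (S : Multiset O) (u : O[X]), u.map (residue O) = 1 ∧
      (R.map (X - C ·)).prod = C e * ((S.map (X - C ·)).prod * u).map O.subtype := by
  induction R using Multiset.induction with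
  | empty => exact ⟨1, 0, 1, Polynomial.map_one _, by simp⟩
  | cons r R ih =>
    obtain ⟨e, S, u, hu, heq⟩ := ih
    by_cases hr : r ∈ O
    · refine ⟨e, ⟨r, hr⟩ ::ₘ S, u, hu, ?_⟩
      simp only [Multiset.map_cons, Multiset.prod_cons, heq, Polynomial.map_mul,
        Polynomial.map_sub, map_X, map_C, subtype_apply]
      ring
    · have hr0 : r ≠ 0 := fun h => hr (h ▸ O.zero_mem)
      have hinv : r⁻¹ ∈ O := (O.mem_or_inv_mem r).resolve_left hr
      have hres : residue O ⟨r⁻¹, hinv⟩ = 0 := by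
        rw [residue_eq_zero_iff, ← coe_mem_nonunits_iff, inv_mem_nonunits_iff]
        exact Or.inr hr
      refine ⟨-r * e, S, (1 - C ⟨r⁻¹, hinv⟩ * X) * u, by simp [hu, hres], ?_⟩
      simp only [Multiset.map_cons, Multiset.prod_cons, heq, Polynomial.map_mul,
        Polynomial.map_sub, map_X, map_C, Polynomial.map_one, subtype_apply, C_mul]
      have hlin : (X - C r : L[X]) = C (-r) * (1 - C r⁻¹ * X) := by
        rw [mul_sub, ← mul_assoc, ← C_mul, neg_mul, mul_inv_cancel₀ hr0, C_neg, map_neg, C_1]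
        ring
      rw [hlin]
      ring

theorem mem_of_map_eq_C_mul_map {P Q : O[X]} (hQ : Q.map (residue O) ≠ 0) {e : L}
    (h : P.map O.subtype = C e * Q.map O.subtype) : e ∈ O := by
  obtain ⟨k, hk⟩ : ∃ k, (Q.map (residue O)).coeff k ≠ 0 := by
    by_contra! h0
    exact hQ (Polynomial.ext h0)
  rw [coeff_map, residue_ne_zero_iff_isUnit] at hk
  obtain ⟨w, hw⟩ := hk
  have hcoeff : (P.coeff k : L) = e * (w : O) := by
    simpa [coeff_map, coeff_C_mul, hw] using congr_arg (coeff · k) h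
  have he : e = P.coeff k * ((w⁻¹ : Oˣ) : O) := by
    rw [hcoeff, mul_assoc, ← MulMemClass.coe_mul, Units.mul_inv, OneMemClass.coe_one, mul_one]
  exact he ▸ (P.coeff k * ((w⁻¹ : Oˣ) : O)).2

theorem exists_eq_C_mul_prod_X_sub_C_mul {P : O[X]} (hP : (P.map O.subtype).Splits) :
    ∃ (d : O) (S : Multiset O) (u : O[X]), u.map (residue O) = 1 ∧
      P = C d * ((S.map (X - C ·)).prod * u) := by
  obtain ⟨e, S, u, hu, he⟩ := O.exists_prod_X_sub_C_eq_C_mul_map (P.map O.subtype).roots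
  set Q := (S.map (X - C ·)).prod * u
  have hPQ : P.map O.subtype = C ((P.map O.subtype).leadingCoeff * e) * Q.map O.subtype := by
    conv_lhs => rw [hP.eq_prod_roots]
    rw [he, C_mul, mul_assoc]
  have hQ : Q.map (residue O) ≠ 0 := by
    rw [Polynomial.map_mul, hu, mul_one]
    exact ((monic_multiset_prod_of_monic _ _ fun s _ => monic_X_sub_C s).map _).ne_zero
  refine ⟨⟨_, O.mem_of_map_eq_C_mul_map hQ hPQ⟩, S, u, hu, ?_⟩
  apply map_injective _ O.subtype_injective
  rw [Polynomial.map_mul, map_C]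
  exact hPQ

theorem existsUnique_isRoot_residue_eq {P : O[X]} (hP : (P.map O.subtype).Splits) {a : O}
    (ha : (P.map (residue O)).IsRoot (residue O a))
    (ha' : ¬ (derivative (P.map (residue O))).IsRoot (residue O a)) :
    ∃! r : O, P.IsRoot r ∧ residue O r = residue O a := by
  classical
  obtain ⟨d, S, u, hu, hPdSu⟩ := O.exists_eq_C_mul_prod_X_sub_C_mul hP
  have hmap : P.map (residue O) = C (residue O d) * ((S.map (residue O)).map (X - C ·)).prod := by
    simp [hPdSu, Polynomial.map_mul, hu, Polynomial.map_multiset_prod, Multiset.map_map]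
  have hne : P.map (residue O) ≠ 0 := fun h => ha' (by simp [h])
  have hd : residue O d ≠ 0 := fun h => hne (by rw [hmap, h, C_0, zero_mul])
  have hmult : (P.map (residue O)).rootMultiplicity (residue O a) = 1 :=
    le_antisymm (not_lt.1 fun h => ha' ((one_lt_rootMultiplicity_iff_isRoot hne).1 h).2)
      ((rootMultiplicity_pos hne).2 ha)
  have hcount : (S.map (residue O)).count (residue O a) = 1 := by
    rw [← roots_multiset_prod_X_sub_C (S.map (residue O)), ← roots_C_mul _ hd, ← hmap,
      count_roots, hmult]
  rw [Multiset.count_map] at hcount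
  obtain ⟨r, hr⟩ := Multiset.card_eq_one.1 hcount
  have hmem (x : O) : x ∈ S ∧ residue O a = residue O x ↔ x = r := by
    simpa only [Multiset.mem_filter, Multiset.mem_singleton] using
      iff_of_eq (congrArg (x ∈ ·) hr)
  have hroot (x : O) : P.IsRoot x ↔ x ∈ S := by
    have hd0 : d ≠ 0 := fun h => hd (by rw [h, map_zero])
    have hux : u.eval x ≠ 0 := fun h => by
      simpa [← eval₂_at_apply, ← eval_map, hu] using congr_arg (residue O) h
    simp [hPdSu, IsRoot, eval_multiset_prod, hd0, hux, Multiset.prod_eq_zero_iff, sub_eq_zero]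
  refine ⟨r, ?_, fun y ⟨hy, hya⟩ => (hmem y).1 ⟨(hroot y).1 hy, hya.symm⟩⟩
  obtain ⟨hrS, hra⟩ := (hmem r).2 rfl
  exact ⟨(hroot r).2 hrS, hra.symm⟩

theorem residue_eq_residue_iff_sub_mem_nonunits {x y : O} :
    residue O x = residue O y ↔ (x - y : L) ∈ O.nonunits := by
  rw [← sub_eq_zero, ← map_sub, residue_eq_zero_iff, ← coe_mem_nonunits_iff]
  rfl

theorem isRoot_map_residue_iff {P : O[X]} {x : O} :
    (P.map (residue O)).IsRoot (residue O x) ↔ (P.map O.subtype).eval (x : L) ∈ O.nonunits := by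
  rw [IsRoot, eval_map, eval₂_at_apply, residue_eq_zero_iff, ← coe_mem_nonunits_iff, eval_map,
    ← subtype_apply x, eval₂_at_apply, subtype_apply]

theorem existsUnique_isRoot_sub_mem_nonunits {P : L[X]} (hP : P.Splits)
    (hcoeff : ∀ n, P.coeff n ∈ O) {b : L} (hb : b ∈ O) (hPb : P.eval b ∈ O.nonunits)
    (hP'b : (derivative P).eval b ∉ O.nonunits) :
    ∃! r, P.IsRoot r ∧ r - b ∈ O.nonunits := by
  obtain ⟨Q, rfl⟩ : ∃ Q : O[X], Q.map O.subtype = P :=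
    lifts_iff_coeff_lifts _ |>.2 fun n => ⟨⟨_, hcoeff n⟩, rfl⟩
  lift b to O using hb
  obtain ⟨r, ⟨hr, hrb⟩, huniq⟩ := O.existsUnique_isRoot_residue_eq hP
    (O.isRoot_map_residue_iff.2 hPb)
    (by rwa [derivative_map, isRoot_map_residue_iff, ← derivative_map])
  refine ⟨r, ⟨hr.map, O.residue_eq_residue_iff_sub_mem_nonunits.1 hrb⟩,
    fun y ⟨hy, hyb⟩ => ?_⟩
  lift y to O using by simpa using O.add_mem _ _ (O.nonunits_subset hyb) b.2
  rw [huniq y ⟨(isRoot_map_iff O.subtype_injective).1 hy,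
    O.residue_eq_residue_iff_sub_mem_nonunits.2 hyb⟩]

theorem mem_nonunits_comap {K : Type*} [Field K] {A : ValuationSubring L} {f : K →+* L} {x : K} :
    x ∈ (A.comap f).nonunits ↔ f x ∈ A.nonunits := by
  simp [mem_nonunits_iff_or, mem_comap, map_inv₀]

theorem comap_algEquiv_eq_self_of_unique_extension {K : Type*} [Field K] [Algebra K L]
    {W : ValuationSubring L}
    (huniq : ∀ W' : ValuationSubring L,
      W'.comap (algebraMap K L) = W.comap (algebraMap K L) → W' = W)
    (σ : L ≃ₐ[K] L) : W.comap (σ : L →+* L) = W :=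
  huniq _ (by rw [comap_comap, show (σ : L →+* L).comp (algebraMap K L) = algebraMap K L from
    RingHom.ext σ.commutes])

theorem exists_isRoot_residue_eq_of_existsUnique_comap_eq {K : Type*} [Field K] [Algebra K L]
    [IsGalois K L] (v : ValuationSubring K)
    (hv : ∃! W : ValuationSubring L, W.comap (algebraMap K L) = v) (f : v[X])
    (hsplit : ((f.map v.subtype).map (algebraMap K L)).Splits) (a : v)
    (ha : (f.map (residue v)).IsRoot (residue v a))
    (ha' : ¬ (derivative (f.map (residue v))).IsRoot (residue v a)) :
    ∃ α : v, f.IsRoot α ∧ residue v α = residue v a := by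
  obtain ⟨W, rfl, huniq⟩ := hv
  have heval (g : K[X]) (x : K) :
      (g.map (algebraMap K L)).eval (algebraMap K L x) ∈ W.nonunits ↔
        g.eval x ∈ (W.comap (algebraMap K L)).nonunits := by
    rw [eval_map, eval₂_at_apply, mem_nonunits_comap]
  obtain ⟨r, ⟨hr, hrb⟩, hruniq⟩ := W.existsUnique_isRoot_sub_mem_nonunits hsplit
    (fun n => by rw [coeff_map, coeff_map]; exact (f.coeff n).2) a.2
    ((heval _ _).2 (isRoot_map_residue_iff _ |>.1 ha))
    (by rwa [derivative_map, heval, derivative_map, ← isRoot_map_residue_iff, ← derivative_map])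
  have hfix (σ : L ≃ₐ[K] L) : σ r = r := by
    refine hruniq _ ⟨?_, ?_⟩
    · rw [IsRoot, eval_map_algebraMap, aeval_algEquiv, AlgHom.comp_apply, ← eval_map_algebraMap,
        hr.eq_zero, map_zero]
    · rw [← σ.commutes, ← map_sub]
      exact mem_nonunits_comap (f := (σ : L →+* L)) |>.1
        (by rwa [comap_algEquiv_eq_self_of_unique_extension huniq])
  obtain ⟨α, rfl⟩ := (InfiniteGalois.mem_range_algebraMap_iff_fixed r).2 hfix
  have hαa : α - a ∈ (W.comap (algebraMap K L)).nonunits :=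
    mem_nonunits_comap.2 (by rwa [map_sub])
  lift α to W.comap (algebraMap K L) using
    by simpa using (W.comap _).add_mem _ _ ((W.comap _).nonunits_subset hαa) a.2
  refine ⟨α, ?_, residue_eq_residue_iff_sub_mem_nonunits _ |>.2 hαa⟩
  rw [Polynomial.map_map] at hr
  exact (isRoot_map_iff (f := (algebraMap K L).comp (W.comap (algebraMap K L)).subtype)
    ((algebraMap K L).injective.comp (W.comap _).subtype_injective)).1 hr

end ValuationSubring

theorem isGalois_pClosure (p : ℕ) (K : Type*) [Field K] (Ω : Type*) [Field Ω] [Algebra K Ω] :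
    IsGalois K (pClosure p K Ω) := by
  rw [pClosure, iSup_subtype']
  have (N : {N : IntermediateField K Ω // IsGalois K N ∧ FiniteDimensional K N ∧
      ∃ k : ℕ, Module.finrank K N = p ^ k}) : IsGalois K N := N.2.1
  -- found by `IntermediateField.normal_iSup` and `IntermediateField.isSeparable_iSup`
  exact {}

theorem pHenselian_lifts_roots_general (p : ℕ)
    {K : Type*} [Field K] (v : ValuationSubring K)
    (hhens : ∃! W : ValuationSubring (pClosure p K (AlgebraicClosure K)),
      W.comap (algebraMap K (pClosure p K (AlgebraicClosure K))) = v)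
    (f : Polynomial v)
    (hsplit : Polynomial.Splits
      ((f.map v.subtype).map (algebraMap K (pClosure p K (AlgebraicClosure K)))))
    (a : v)
    (ha : (f.map (IsLocalRing.residue v)).IsRoot (IsLocalRing.residue v a))
    (ha' : ¬ (Polynomial.derivative (f.map (IsLocalRing.residue v))).IsRoot
      (IsLocalRing.residue v a)) :
    ∃ α : v, f.IsRoot α ∧ IsLocalRing.residue v α = IsLocalRing.residue v a := by
  have := isGalois_pClosure p K (AlgebraicClosure K)
  exact v.exists_isRoot_residue_eq_of_existsUnique_comap_eq hhens f hsplit a ha ha'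

/-- let `(K, v)` be a valued field such that `v` extends uniquely to the
maximal pro-`p` extension `K(p)` (taken inside an algebraic closure of `K`), and let
`f ∈ O_v[T]` split in `K(p)`.  If `a ∈ O_v` satisfies `f̄(ā) = 0` and `f̄'(ā) ≠ 0` in the
residue field, then there is `α ∈ O_v` with `f(α) = 0` and `ᾱ = ā`. -/
theorem pHenselian_lifts_roots (p : ℕ) (hp : p.Prime)
    {K : Type*} [Field K] (v : ValuationSubring K)
    (hhens : ∃! W : ValuationSubring (pClosure p K (AlgebraicClosure K)),
      W.comap (algebraMap K (pClosure p K (AlgebraicClosure K))) = v)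
    (f : Polynomial v)
    (hsplit : Polynomial.Splits
      ((f.map v.subtype).map (algebraMap K (pClosure p K (AlgebraicClosure K)))))
    (a : v)
    (ha : (f.map (IsLocalRing.residue v)).IsRoot (IsLocalRing.residue v a))
    (ha' : ¬ (Polynomial.derivative (f.map (IsLocalRing.residue v))).IsRoot
      (IsLocalRing.residue v a)) :
    ∃ α : v, f.IsRoot α ∧ IsLocalRing.residue v α = IsLocalRing.residue v a :=
  pHenselian_lifts_roots_general p v hhens f hsplit a ha ha'
end
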